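/- For every n ≥ 0, the polynomial identity e^{−tD²}[tⁿ] = ∑_{k=1}^n (−1)^{n−k} (n!/k!) C(n−1,k−1) t^k holds, and this polynomial equals (−1)ⁿ n! L_n^{(−1)}(t), where L_n^{(−1)} is the associated Laguerre polynomial with parameter α = −1; moreover the family {e^{−tD²}[tⁿ]}_{n≥1} is orthogonal with respect to the measure t^{−1}e^{−t}dt on [0,∞), i.e. ∫₀^∞ t^{−1} e^{−t} e^{−tD²}[tⁿ] · e^{−tD²}[t^m] dt = 0 for n ≠ m, n,m ≥ 1. -/

import Mathlib

/-!
Since `tD²` sends `t^k` to `k(k-1) t^(k-1)`, the series for `e^{-tD²}[tⁿ]` terminates after `n`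
steps, and reindexing by the surviving power `k` turns its coefficients into the signed Lah numbers
`(-1)^(n-k) (n!/k!) C(n-1,k-1)`, which are `(-1)ⁿ n!` times the coefficients of `L_n^{(-1)}`.

For orthogonality with `m < n` it suffices to integrate `e^{-tD²}[tⁿ]` against `t^l`, `1 ≤ l < n`.
As `∫₀^∞ t^(k+l-1) e^{-t} dt = (k+l-1)!`, this gives `∑ₖ (-1)^(n-k) (n!/k!) C(n-1,k-1) (k+l-1)!`.
Writing `(k+l-1)!/k! = (k+1)(k+2)⋯(k+l-1)`, a polynomial of degree `l-1` in `k`, the sum is `n!`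
times an `(n-1)`-st forward difference of that polynomial, hence zero.
-/

open Polynomial

/-- The operator `tD²` : `p ↦ t·p''`. -/
noncomputable def tD2 (p : Polynomial ℝ) : Polynomial ℝ :=
  X * (derivative (derivative p))

/-- The operator `e^{-tD²} = ∑_j (-1)^j (tD²)^j / j!`, a finite sum on each
polynomial. -/
noncomputable def expTD2neg (p : Polynomial ℝ) : Polynomial ℝ :=
  ∑ j ∈ Finset.range (p.natDegree + 1), ((-1 : ℝ) ^ j * ((j.factorial : ℝ))⁻¹) • tD2^[j] p

/-- The associated Laguerre polynomial `L_n^{(-1)}(t) = ∑_k (-1)^k C(n-1, n-k) t^k / k!`. -/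
noncomputable def laguerreNegOne (n : ℕ) : Polynomial ℝ :=
  ∑ k ∈ Finset.range (n + 1),
    ((-1 : ℝ) ^ k * ((n - 1).choose (n - k) : ℝ) / (k.factorial : ℝ)) • X ^ k

open MeasureTheory Finset Real
open scoped Nat fwdDiff

noncomputable def signedLah (n k : ℕ) : ℝ :=
  (-1 : ℝ) ^ (n - k) * ((n.factorial : ℝ) / (k.factorial : ℝ)) * ((n - 1).choose (k - 1) : ℝ)

lemma sum_range_succ_eq_sum_Icc_of_eq_zero {M : Type*} [AddCommMonoid M] {f : ℕ → M}
    (h : f 0 = 0) (n : ℕ) : ∑ k ∈ range (n + 1), f k = ∑ k ∈ Icc 1 n, f k := by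
  rw [range_eq_Ico, sum_eq_sum_Ico_succ_bot n.succ_pos, h, zero_add, ← Ico_add_one_right_eq_Icc]
  rfl

lemma tD2_smul (c : ℝ) (p : ℝ[X]) : tD2 (c • p) = c • tD2 p := by
  simp only [tD2, derivative_smul, mul_smul_comm]

lemma tD2_X_pow (k : ℕ) : tD2 (X ^ k) = ((k * (k - 1) : ℕ) : ℝ) • X ^ (k - 1) := by
  rcases k with _ | _ | k
  · simp [tD2]
  · simp [tD2]
  · simp only [tD2, derivative_X_pow, smul_eq_C_mul, derivative_C_mul, Nat.add_sub_cancel,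
      Nat.cast_mul, C_mul]
    ring

lemma iterate_tD2_X_pow (n j : ℕ) :
    tD2^[j] (X ^ n) = ((n.descFactorial j * (n - 1).descFactorial j : ℕ) : ℝ) • X ^ (n - j) := by
  induction j with
  | zero => simp
  | succ j ih =>
    rw [Function.iterate_succ_apply', ih, tD2_smul, tD2_X_pow, smul_smul,
      Nat.descFactorial_succ, Nat.descFactorial_succ, Nat.sub_right_comm n 1 j, ← Nat.sub_sub]
    congr 1
    push_cast
    ring

lemma signedLah_eq_descFactorial {n k : ℕ} (hk : 1 ≤ k) (hkn : k ≤ n) :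
    signedLah n k = (-1) ^ (n - k) * ((n - k)! : ℝ)⁻¹ *
      ((n.descFactorial (n - k) * (n - 1).descFactorial (n - k) : ℕ) : ℝ) := by
  have h₁ : k ! * n.descFactorial (n - k) = n ! := by
    simpa [Nat.sub_sub_self hkn] using Nat.factorial_mul_descFactorial (Nat.sub_le n k)
  have h₂ : (n - 1).descFactorial (n - k) = (n - k)! * (n - 1).choose (k - 1) := by
    rw [Nat.descFactorial_eq_factorial_mul_choose,
      Nat.choose_symm_of_eq_add (by omega : n - 1 = n - k + (k - 1))]
  rw [signedLah, ← h₁, h₂]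
  push_cast
  field_simp

theorem expTD2neg_X_pow {n : ℕ} (hn : 1 ≤ n) :
    expTD2neg (X ^ n) = ∑ k ∈ Icc 1 n, signedLah n k • X ^ k := by
  rw [expTD2neg, natDegree_X_pow, ← sum_range_reflect, sum_range_succ_eq_sum_Icc_of_eq_zero]
  · refine sum_congr rfl fun k hk ↦ ?_
    obtain ⟨hk, hkn⟩ := mem_Icc.mp hk
    rw [iterate_tD2_X_pow, smul_smul, Nat.add_sub_cancel, Nat.sub_sub_self hkn,
      signedLah_eq_descFactorial hk hkn]
  · simp [iterate_tD2_X_pow,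
      Nat.descFactorial_eq_zero_iff_lt.mpr (Nat.sub_one_lt_of_le hn le_rfl)]

theorem smul_laguerreNegOne {n : ℕ} (hn : 1 ≤ n) :
    ((-1 : ℝ) ^ n * n !) • laguerreNegOne n = ∑ k ∈ Icc 1 n, signedLah n k • X ^ k := by
  rw [laguerreNegOne, smul_sum, sum_range_succ_eq_sum_Icc_of_eq_zero]
  · refine sum_congr rfl fun k hk ↦ ?_
    obtain ⟨hk, hkn⟩ := mem_Icc.mp hk
    have sign : (-1 : ℝ) ^ n * (-1) ^ k = (-1) ^ (n - k) := by
      rw [← pow_sub_mul_pow _ hkn, mul_assoc, ← mul_pow]; simp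
    rw [smul_smul, signedLah, Nat.choose_symm_of_eq_add (by omega : n - 1 = n - k + (k - 1)),
      ← sign]
    congr 1
    ring
  · simp [Nat.choose_eq_zero_of_lt (Nat.sub_one_lt_of_le hn le_rfl)]

lemma integrableOn_exp_neg_mul_pow (d : ℕ) :
    IntegrableOn (fun t : ℝ ↦ exp (-t) * t ^ d) (Set.Ioi 0) := by
  simpa [Real.rpow_natCast] using Real.GammaIntegral_convergent (s := d + 1) (by positivity)

lemma integral_exp_neg_mul_pow (d : ℕ) : ∫ t in Set.Ioi 0, exp (-t) * t ^ d = d ! := by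
  simpa [Real.rpow_natCast, Real.Gamma_nat_eq_factorial] using
    (Real.Gamma_eq_integral (s := d + 1) (by positivity)).symm

lemma integral_inv_mul_exp_neg_mul_sum_mul_sum (a b : ℕ → ℝ) (n m : ℕ) :
    ∫ t in Set.Ioi 0, t⁻¹ * exp (-t) *
        ((∑ k ∈ Icc 1 n, a k * t ^ k) * ∑ l ∈ Icc 1 m, b l * t ^ l) =
      ∑ k ∈ Icc 1 n, ∑ l ∈ Icc 1 m, a k * b l * (k + l - 1)! := by
  have integrand : ∀ t ∈ Set.Ioi (0 : ℝ), t⁻¹ * exp (-t) *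
      ((∑ k ∈ Icc 1 n, a k * t ^ k) * ∑ l ∈ Icc 1 m, b l * t ^ l) =
        ∑ k ∈ Icc 1 n, ∑ l ∈ Icc 1 m, a k * b l * (exp (-t) * t ^ (k + l - 1)) := by
    intro t (ht : 0 < t)
    rw [sum_mul_sum, mul_sum]
    refine sum_congr rfl fun k hk ↦ (mul_sum ..).trans (sum_congr rfl fun l _ ↦ ?_)
    obtain ⟨i, rfl⟩ := Nat.exists_eq_add_of_le (mem_Icc.mp hk).1
    rw [show 1 + i + l - 1 = i + l by omega]
    field_simp
    ring
  have integrable (k l : ℕ) := (integrableOn_exp_neg_mul_pow (k + l - 1)).const_mul (a k * b l)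
  rw [setIntegral_congr_fun measurableSet_Ioi integrand,
    integral_finsetSum _ fun k _ ↦ integrable_finsetSum _ fun l _ ↦ integrable k l]
  refine sum_congr rfl fun k _ ↦ ?_
  rw [integral_finsetSum _ fun l _ ↦ integrable k l]
  simp only [integral_const_mul, integral_exp_neg_mul_pow]

lemma sum_signedLah_mul_factorial_eq_zero {n l : ℕ} (hl : 1 ≤ l) (hln : l < n) :
    ∑ k ∈ Icc 1 n, signedLah n k * ((k + l - 1)! : ℝ) = 0 := by
  obtain ⟨N, rfl⟩ : ∃ N, n = N + 1 := ⟨n - 1, by omega⟩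
  set P := ascPochhammer ℝ (l - 1)
  have hP : (Δ_[1])^[N] P.eval = 0 :=
    fwdDiff_iter_eq_zero_of_degree_lt (by rw [ascPochhammer_natDegree]; omega)
  have factorial_eq (j : ℕ) : ((j + l)! : ℝ) = (j + 1)! * P.eval ((j : ℝ) + 2) := by
    have := Nat.factorial_mul_ascFactorial (j + 1) (l - 1)
    rw [show j + 1 + (l - 1) = j + l by omega] at this
    rw [← this, show (j : ℝ) + 2 = ((j + 1 + 1 : ℕ) : ℝ) by push_cast; ring,
      ascPochhammer_nat_eq_natCast_ascFactorial, Nat.cast_mul]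
  calc ∑ k ∈ Icc 1 (N + 1), signedLah (N + 1) k * ((k + l - 1)! : ℝ)
      = ∑ j ∈ range (N + 1), signedLah (N + 1) (1 + j) * ((1 + j + l - 1)! : ℝ) := by
        rw [← Ico_add_one_right_eq_Icc, sum_Ico_eq_sum_range, Nat.add_sub_cancel]
    _ = ((N + 1)! : ℝ) * ((Δ_[1])^[N] (fun x ↦ P.eval (x + 2)) 0) := by
        rw [fwdDiff_iter_eq_sum_shift, mul_sum]
        refine sum_congr rfl fun j _ ↦ ?_
        rw [show 1 + j + l - 1 = j + l by omega, factorial_eq, signedLah,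
          show N + 1 - (1 + j) = N - j by omega, Nat.add_sub_cancel, Nat.add_sub_cancel_left,
          zsmul_eq_mul, nsmul_eq_mul, zero_add, mul_one]
        push_cast
        field_simp
        rw [Nat.add_comm 1 j]
        ring
    _ = 0 := by rw [fwdDiff_iter_comp_add 1 P.eval, hP, Pi.zero_apply, mul_zero]

lemma integral_sum_signedLah_mul_sum_signedLah_eq_zero {m n : ℕ} (hmn : m ≠ n) :
    ∫ t in Set.Ioi 0, t⁻¹ * exp (-t) *
      ((∑ k ∈ Icc 1 n, signedLah n k * t ^ k) * ∑ l ∈ Icc 1 m, signedLah m l * t ^ l) = 0 := by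
  wlog hlt : m < n generalizing m n
  · convert this hmn.symm (by omega) using 3 with t
    ring
  rw [integral_inv_mul_exp_neg_mul_sum_mul_sum, sum_comm]
  refine sum_eq_zero fun l hl ↦ ?_
  obtain ⟨hl, hlm⟩ := mem_Icc.mp hl
  simp_rw [mul_right_comm _ (signedLah m l), ← sum_mul,
    sum_signedLah_mul_factorial_eq_zero hl (hlm.trans_lt hlt), zero_mul]

theorem expTD2neg_monomial_laguerre (n : ℕ) (hn : 1 ≤ n) :
    (expTD2neg ((X : Polynomial ℝ) ^ n) =
      ∑ k ∈ Finset.Icc 1 n,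
        ((-1 : ℝ) ^ (n - k) * ((n.factorial : ℝ) / (k.factorial : ℝ)) *
          ((n - 1).choose (k - 1) : ℝ)) • X ^ k) ∧
    (expTD2neg ((X : Polynomial ℝ) ^ n) =
      ((-1 : ℝ) ^ n * (n.factorial : ℝ)) • laguerreNegOne n) ∧
    (∀ m : ℕ, 1 ≤ m → m ≠ n →
      (∫ t in Set.Ioi (0 : ℝ),
        t⁻¹ * Real.exp (-t) *
          ((expTD2neg ((X : Polynomial ℝ) ^ n)).eval t *
            (expTD2neg ((X : Polynomial ℝ) ^ m)).eval t)) = 0) := by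
  refine ⟨expTD2neg_X_pow hn, (expTD2neg_X_pow hn).trans (smul_laguerreNegOne hn).symm,
    fun m hm hmn ↦ ?_⟩
  simp only [expTD2neg_X_pow hn, expTD2neg_X_pow hm, eval_finsetSum, eval_smul, eval_X_pow,
    smul_eq_mul]
  exact integral_sum_signedLah_mul_sum_signedLah_eq_zero hmn
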